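/- arXiv:0806.1339 — 8 statements merged into one kernel-verified Lean document; each statement's English description precedes it below -/
import Mathlib

section
/- For all complex numbers ζ, η, ξ such that 1 − conj(η)·ξ ≠ 0, 1 − conj(ζ)·η ≠ 0, 1 − conj(ζ)·(η·ξ) ≠ 0 and 1 − conj(ζ·η)·(((1 − ζ·conj(η))/(1 − η·conj(ζ)))·ξ) ≠ 0, one has ζ·(η·ξ) = (ζ·η)·( ((1 − ζ·conj(η))/(1 − η·conj(ζ)))·ξ ). That is, the left associator l_{(ζ,η)} = L_{ζ·η}^{-1} ∘ L_ζ ∘ L_η of the loop QℂC is multiplication by the unimodular factor (1 − ζ·conj(η))/(1 − η·conj(ζ)). -/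
/-!
Clearing the inner denominator (`1 - conj η * ξ` on the left, `d = 1 - conj ζ * η` on the right)
turns both sides into the same linear fractional function of `ξ`,
`((ζ + η) + (1 - ζ * conj η) * ξ) / ((1 - conj ζ * η) - (conj ζ + conj η) * ξ)`.
On the right this works because the unimodular factor `conj d / d` cancels the denominator
`conj d` of `conj (ζ·η)`.
-/

open Complex

/-- The loop QℂC: ℂ with the partial operation ζ·η = (ζ+η)/(1 - conj ζ · η). -/
noncomputable def qcMul (ζ η : ℂ) : ℂ := (ζ + η) / (1 - (starRingEnd ℂ) ζ * η)

open ComplexConjugate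

theorem qcMul_qcMul_eq_div (ζ η ξ : ℂ) (h : 1 - conj η * ξ ≠ 0) :
    qcMul ζ (qcMul η ξ) =
      (ζ + η + (1 - ζ * conj η) * ξ) / (1 - conj ζ * η - (conj ζ + conj η) * ξ) := by
  rw [qcMul, qcMul, ← mul_div_mul_right _ _ h]
  congr 1
  · rw [add_mul, div_mul_cancel₀ _ h]
    ring
  · rw [sub_mul, one_mul, mul_assoc, div_mul_cancel₀ _ h]
    ring

theorem conj_qcMul_mul_twist (ζ η : ℂ) (h : 1 - conj ζ * η ≠ 0) :
    conj (qcMul ζ η) * ((1 - ζ * conj η) / (1 - η * conj ζ)) =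
      (conj ζ + conj η) / (1 - conj ζ * η) := by
  have h_conj : 1 - ζ * conj η ≠ 0 := by
    simpa [mul_comm] using (map_ne_zero (starRingEnd ℂ)).mpr h
  rw [qcMul, map_div₀, mul_comm η]
  simp only [map_sub, map_add, map_mul, map_one, conj_conj]
  rw [div_mul_div_comm, mul_comm (1 - ζ * conj η), mul_div_mul_right _ _ h_conj]

theorem qcMul_qcMul_twist_eq_div (ζ η ξ : ℂ) (h : 1 - conj ζ * η ≠ 0) :
    qcMul (qcMul ζ η) ((1 - ζ * conj η) / (1 - η * conj ζ) * ξ) =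
      (ζ + η + (1 - ζ * conj η) * ξ) / (1 - conj ζ * η - (conj ζ + conj η) * ξ) := by
  rw [qcMul, ← mul_assoc, conj_qcMul_mul_twist ζ η h, qcMul, mul_comm η (conj ζ),
    ← mul_div_mul_right _ _ h]
  congr 1
  · rw [add_mul, div_mul_cancel₀ _ h, mul_right_comm, div_mul_cancel₀ _ h]
  · rw [sub_mul, one_mul, mul_right_comm, div_mul_cancel₀ _ h]

theorem qc_left_associator_general (ζ η ξ : ℂ)
    (h1 : 1 - (starRingEnd ℂ) η * ξ ≠ 0)
    (h2 : 1 - (starRingEnd ℂ) ζ * η ≠ 0) :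
    qcMul ζ (qcMul η ξ) =
      qcMul (qcMul ζ η) ((1 - ζ * (starRingEnd ℂ) η) / (1 - η * (starRingEnd ℂ) ζ) * ξ) := by
  rw [qcMul_qcMul_eq_div ζ η ξ h1, qcMul_qcMul_twist_eq_div ζ η ξ h2]

/-- the left associator of QℂC is multiplication by
    (1 − ζ·conj η)/(1 − η·conj ζ):
    ζ·(η·ξ) = (ζ·η)·( ((1 − ζ·conj η)/(1 − η·conj ζ))·ξ ). -/
theorem qc_left_associator (ζ η ξ : ℂ)
    (h1 : 1 - (starRingEnd ℂ) η * ξ ≠ 0)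
    (h2 : 1 - (starRingEnd ℂ) ζ * η ≠ 0)
    (h3 : 1 - (starRingEnd ℂ) ζ * qcMul η ξ ≠ 0)
    (h4 : 1 - (starRingEnd ℂ) (qcMul ζ η) *
        ((1 - ζ * (starRingEnd ℂ) η) / (1 - η * (starRingEnd ℂ) ζ) * ξ) ≠ 0) :
    qcMul ζ (qcMul η ξ) =
      qcMul (qcMul ζ η) ((1 - ζ * (starRingEnd ℂ) η) / (1 - η * (starRingEnd ℂ) ζ) * ξ) :=
  qc_left_associator_general ζ η ξ h1 h2
end

section
/- Let f : ℂ → ℂ be twice continuously differentiable as a map of real vector spaces, and define the vector fields Γ₁ and Γ₂ of the loop QℂC acting on f by (Γ₁ f)(η) = (1 + |η|²)·∂f(η) and (Γ₂ f)(η) = (1 + |η|²)·∂̄f(η). Then for every η ∈ ℂ, (Γ₁(Γ₂ f))(η) − (Γ₂(Γ₁ f))(η) = conj(η)·(Γ₂ f)(η) − η·(Γ₁ f)(η); i.e. the commutator satisfies [Γ₁, Γ₂] = conj(η)·Γ₂ − η·Γ₁, so the structure functions of the quasialgebra of QℂC are C¹₁₂ = −η and C²₁₂ = conj(η). -/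
/-! In Γ₁(Γ₂ f) − Γ₂(Γ₁ f), the Leibniz rule with ∂(1 + |η|²) = conj η and ∂̄(1 + |η|²) = η
produces the first-order terms (1 + |η|²)(conj η ∂̄f − η ∂f) = conj η Γ₂ f − η Γ₁ f, while the
second-order terms (1 + |η|²)²(∂∂̄f − ∂̄∂f) vanish because the second real derivative of a C² map
is symmetric. -/

open Complex

/-- Wirtinger derivative ∂f(η) = (1/2)(Df(η)(1) − i·Df(η)(i)) of a real-differentiable
    map f : ℂ → ℂ. -/
noncomputable def wirtD (f : ℂ → ℂ) (η : ℂ) : ℂ :=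
  (1 / 2) * (fderiv ℝ f η 1 - Complex.I * fderiv ℝ f η Complex.I)

/-- Conjugate Wirtinger derivative ∂̄f(η) = (1/2)(Df(η)(1) + i·Df(η)(i)). -/
noncomputable def wirtDbar (f : ℂ → ℂ) (η : ℂ) : ℂ :=
  (1 / 2) * (fderiv ℝ f η 1 + Complex.I * fderiv ℝ f η Complex.I)

/-- The vector field Γ₁ = (1 + |η|²)∂_η of the loop QℂC. -/
noncomputable def Gamma1 (f : ℂ → ℂ) (η : ℂ) : ℂ :=
  (1 + (Complex.normSq η : ℂ)) * wirtD f η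

/-- The vector field Γ₂ = (1 + |η|²)∂_{conj η} of the loop QℂC. -/
noncomputable def Gamma2 (f : ℂ → ℂ) (η : ℂ) : ℂ :=
  (1 + (Complex.normSq η : ℂ)) * wirtDbar f η

open ComplexConjugate

section SecondDerivative

variable {𝕜 E F : Type*} [NontriviallyNormedField 𝕜] [NormedAddCommGroup E] [NormedSpace 𝕜 E]
  [NormedAddCommGroup F] [NormedSpace 𝕜 F] {f : E → F} {x : E}

theorem ContDiffAt.differentiableAt_fderiv (hf : ContDiffAt 𝕜 2 f x) :
    DifferentiableAt 𝕜 (fderiv 𝕜 f) x :=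
  (hf.fderiv_right (m := 1) le_rfl).differentiableAt one_ne_zero

theorem fderiv_fderiv_apply_const (hf : DifferentiableAt 𝕜 (fderiv 𝕜 f) x) (v w : E) :
    fderiv 𝕜 (fun y => fderiv 𝕜 f y v) x w = fderiv 𝕜 (fderiv 𝕜 f) x w v := by
  simp [fderiv_clm_apply hf (differentiableAt_const v)]

end SecondDerivative

section Wirtinger

variable {f g h : ℂ → ℂ} {η : ℂ}

lemma differentiableAt_wirtD (hf : DifferentiableAt ℝ (fderiv ℝ f) η) :
    DifferentiableAt ℝ (wirtD f) η := by
  unfold wirtD; fun_prop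

lemma differentiableAt_wirtDbar (hf : DifferentiableAt ℝ (fderiv ℝ f) η) :
    DifferentiableAt ℝ (wirtDbar f) η := by
  unfold wirtDbar; fun_prop

lemma fderiv_wirtD_apply (hf : DifferentiableAt ℝ (fderiv ℝ f) η) (w : ℂ) :
    fderiv ℝ (wirtD f) η w =
      1 / 2 * (fderiv ℝ (fderiv ℝ f) η w 1 - I * fderiv ℝ (fderiv ℝ f) η w I) := by
  unfold wirtD
  rw [fderiv_const_mul (by fun_prop), fderiv_fun_sub (by fun_prop) (by fun_prop),
    fderiv_const_mul (by fun_prop)]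
  simp [fderiv_fderiv_apply_const hf]

lemma fderiv_wirtDbar_apply (hf : DifferentiableAt ℝ (fderiv ℝ f) η) (w : ℂ) :
    fderiv ℝ (wirtDbar f) η w =
      1 / 2 * (fderiv ℝ (fderiv ℝ f) η w 1 + I * fderiv ℝ (fderiv ℝ f) η w I) := by
  unfold wirtDbar
  rw [fderiv_const_mul (by fun_prop), fderiv_fun_add (by fun_prop) (by fun_prop),
    fderiv_const_mul (by fun_prop)]
  simp [fderiv_fderiv_apply_const hf, mul_add]

lemma wirtD_wirtDbar_comm (hf : ContDiffAt ℝ 2 f η) :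
    wirtD (wirtDbar f) η = wirtDbar (wirtD f) η := by
  have hD := hf.differentiableAt_fderiv
  have hsymm : fderiv ℝ (fderiv ℝ f) η 1 I = fderiv ℝ (fderiv ℝ f) η I 1 :=
    hf.isSymmSndFDerivAt (by simp) 1 I
  simp only [wirtD, wirtDbar, fderiv_wirtD_apply hD, fderiv_wirtDbar_apply hD, hsymm]
  ring

lemma wirtD_mul (hg : DifferentiableAt ℝ g η) (hh : DifferentiableAt ℝ h η) :
    wirtD (fun y => g y * h y) η = wirtD g η * h η + g η * wirtD h η := by
  simp only [wirtD, fderiv_fun_mul hg hh, add_apply, smul_apply, smul_eq_mul]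
  ring

lemma wirtDbar_mul (hg : DifferentiableAt ℝ g η) (hh : DifferentiableAt ℝ h η) :
    wirtDbar (fun y => g y * h y) η = wirtDbar g η * h η + g η * wirtDbar h η := by
  simp only [wirtDbar, fderiv_fun_mul hg hh, add_apply, smul_apply, smul_eq_mul]
  ring

end Wirtinger

lemma hasFDerivAt_one_add_normSq (η : ℂ) :
    HasFDerivAt (fun y : ℂ => 1 + (normSq y : ℂ))
      (η • (conjCLE : ℂ →L[ℝ] ℂ) + conj η • ContinuousLinearMap.id ℝ ℂ) η := by
  simpa [mul_conj] using ((hasFDerivAt_id η).mul conjCLE.hasFDerivAt).const_add (1 : ℂ)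

lemma fderiv_one_add_normSq_apply (η v : ℂ) :
    fderiv ℝ (fun y : ℂ => 1 + (normSq y : ℂ)) η v = η * conj v + conj η * v := by
  simp [(hasFDerivAt_one_add_normSq η).fderiv]

lemma wirtD_one_add_normSq (η : ℂ) : wirtD (fun y : ℂ => 1 + (normSq y : ℂ)) η = conj η := by
  simp only [wirtD, fderiv_one_add_normSq_apply, conj_I, map_one]
  linear_combination (η - conj η) / 2 * I_sq

lemma wirtDbar_one_add_normSq (η : ℂ) : wirtDbar (fun y : ℂ => 1 + (normSq y : ℂ)) η = η := by
  simp only [wirtDbar, fderiv_one_add_normSq_apply, conj_I, map_one]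
  linear_combination (conj η - η) / 2 * I_sq

/-- the commutator of the left quasi-invariant vector fields of QℂC is
    [Γ₁, Γ₂] = conj(η)·Γ₂ − η·Γ₁, i.e. the structure functions are
    C¹₁₂ = −η and C²₁₂ = conj η. -/
theorem qc_commutator (f : ℂ → ℂ) (hf : ContDiff ℝ 2 f) (η : ℂ) :
    Gamma1 (Gamma2 f) η - Gamma2 (Gamma1 f) η =
      (starRingEnd ℂ) η * Gamma2 f η - η * Gamma1 f η := by
  have hf' : ContDiffAt ℝ 2 f η := hf.contDiffAt
  have hD := hf'.differentiableAt_fderiv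
  have hu : DifferentiableAt ℝ (fun y : ℂ => 1 + (normSq y : ℂ)) η :=
    (hasFDerivAt_one_add_normSq η).differentiableAt
  have h12 : wirtD (Gamma2 f) η =
      conj η * wirtDbar f η + (1 + normSq η) * wirtD (wirtDbar f) η := by
    unfold Gamma2
    rw [wirtD_mul hu (differentiableAt_wirtDbar hD), wirtD_one_add_normSq]
  have h21 : wirtDbar (Gamma1 f) η =
      η * wirtD f η + (1 + normSq η) * wirtDbar (wirtD f) η := by
    unfold Gamma1
    rw [wirtDbar_mul hu (differentiableAt_wirtD hD), wirtDbar_one_add_normSq]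
  simp only [Gamma1, Gamma2, h12, h21, wirtD_wirtDbar_comm hf']
  ring
end

section
/- For all η, ζ ∈ ℂ with w := 1 − conj(η)·ζ ≠ 0, the 2×2 complex matrices satisfy U_η · U_ζ · Λ(η,ζ) = U_{η∗ζ}, where η∗ζ := (η + ζ)/w and Λ(η,ζ) := diag(λ, conj(λ)) with the unimodular number λ := w/|w| (so that λ = e^{iφ} with φ = arg(1 − conj(η)·ζ)). That is, the QSU(2) multiplication U_η ∗ U_ζ := U_η U_ζ Λ(η,ζ) reproduces on the parameters the multiplication of the loop QℂC, giving a nonassociative matrix representation of QS². -/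
/-!
`U_η` is the normalised matrix of the quaternion `1 + η j`. With `w = 1 - conj η * ζ`,
the quaternion product is `(1 + η j)(1 + ζ j) = conj w + (η + ζ) j`, and multiplying on the right
by the unit `w / |w|` turns the real part `conj w` into `|w|`, leaving `|w| (1 + ξ j)` with
`ξ = (η + ζ) / w`. The normalisations match by multiplicativity of the quaternion norm,
`|w|² + |η + ζ|² = (1 + |η|²)(1 + |ζ|²)`.
-/

open Complex Matrix

/-- The matrix U_η = (1/√(1+|η|²))·[[1, η], [−conj η, 1]] of the loop QSU(2). -/
noncomputable def Umat (η : ℂ) : Matrix (Fin 2) (Fin 2) ℂ :=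
  ((Real.sqrt (1 + Complex.normSq η) : ℂ))⁻¹ • !![1, η; -((starRingEnd ℂ) η), 1]

/-- The compensating diagonal matrix Λ(η,ζ) = diag(λ, conj λ) with λ = w/|w|,
    w = 1 − conj(η)·ζ. -/
noncomputable def LambdaMat (η ζ : ℂ) : Matrix (Fin 2) (Fin 2) ℂ :=
  let w := 1 - (starRingEnd ℂ) η * ζ
  !![w / (‖w‖ : ℂ), 0; 0, (starRingEnd ℂ) (w / (‖w‖ : ℂ))]

open ComplexConjugate

/-- The quaternion `a + b j` as a complex `2 × 2` matrix. -/
def cayleyKlein (a b : ℂ) : Matrix (Fin 2) (Fin 2) ℂ :=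
  !![a, b; -conj b, conj a]

theorem cayleyKlein_mul (a b c d : ℂ) :
    cayleyKlein a b * cayleyKlein c d =
      cayleyKlein (a * c - b * conj d) (a * d + b * conj c) := by
  ext i j
  fin_cases i <;> fin_cases j <;> simp [cayleyKlein] <;> ring

theorem ofReal_smul_cayleyKlein (r : ℝ) (a b : ℂ) :
    (r : ℂ) • cayleyKlein a b = cayleyKlein (r * a) (r * b) := by
  ext i j
  fin_cases i <;> fin_cases j <;> simp [cayleyKlein]

theorem Umat_eq_smul_cayleyKlein (η : ℂ) :
    Umat η = ((Real.sqrt (1 + normSq η) : ℂ))⁻¹ • cayleyKlein 1 η := by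
  simp [Umat, cayleyKlein]

theorem LambdaMat_eq_cayleyKlein (η ζ : ℂ) :
    LambdaMat η ζ = cayleyKlein ((1 - conj η * ζ) / ‖1 - conj η * ζ‖) 0 := by
  simp [LambdaMat, cayleyKlein]

theorem normSq_one_sub_conj_mul_add_normSq_add (η ζ : ℂ) :
    normSq (1 - conj η * ζ) + normSq (η + ζ) = (1 + normSq η) * (1 + normSq ζ) := by
  simp only [normSq_apply, sub_re, sub_im, add_re, add_im, mul_re, mul_im, conj_re, conj_im,
    one_re, one_im]
  ring

theorem sqrt_one_add_normSq_div {η ζ : ℂ} (hw : 1 - conj η * ζ ≠ 0) :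
    Real.sqrt (1 + normSq ((η + ζ) / (1 - conj η * ζ))) =
      Real.sqrt (1 + normSq η) * Real.sqrt (1 + normSq ζ) / ‖1 - conj η * ζ‖ := by
  have hw' : normSq (1 - conj η * ζ) ≠ 0 := normSq_eq_zero.not.mpr hw
  rw [← Real.sqrt_mul (add_nonneg zero_le_one (normSq_nonneg η)),
    ← normSq_one_sub_conj_mul_add_normSq_add, Complex.norm_def,
    ← Real.sqrt_div' _ (normSq_nonneg _), map_div₀, add_div, div_self hw', add_comm]

theorem cayleyKlein_one_mul_cayleyKlein_one (η ζ : ℂ) :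
    cayleyKlein 1 η * cayleyKlein 1 ζ = cayleyKlein (conj (1 - conj η * ζ)) (η + ζ) := by
  rw [cayleyKlein_mul]
  congr 1 <;> simp [mul_comm, add_comm]

theorem cayleyKlein_conj_mul_cayleyKlein_phase {w : ℂ} (hw : w ≠ 0) (z : ℂ) :
    cayleyKlein (conj w) z * cayleyKlein (w / ‖w‖) 0 = (‖w‖ : ℂ) • cayleyKlein 1 (z / w) := by
  have hn : (‖w‖ : ℂ) ≠ 0 := by exact_mod_cast norm_ne_zero_iff.mpr hw
  rw [cayleyKlein_mul, ofReal_smul_cayleyKlein]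
  congr 1
  · rw [map_zero, mul_zero, sub_zero, ← mul_div_assoc, conj_mul', mul_one]
    field_simp
  · rw [mul_zero, zero_add, map_div₀, conj_ofReal]
    field_simp
    linear_combination z * mul_conj' w

/-- the QSU(2) multiplication U_η ∗ U_ζ := U_η U_ζ Λ(η,ζ) reproduces on
    parameters the QℂC multiplication: U_η · U_ζ · Λ(η,ζ) = U_{η∗ζ}
    with η∗ζ = (η + ζ)/(1 − conj(η)·ζ). -/
theorem qsu2_representation (η ζ : ℂ) (hw : 1 - (starRingEnd ℂ) η * ζ ≠ 0) :
    Umat η * Umat ζ * LambdaMat η ζ = Umat ((η + ζ) / (1 - (starRingEnd ℂ) η * ζ)) := by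
  rw [Umat_eq_smul_cayleyKlein, Umat_eq_smul_cayleyKlein, Umat_eq_smul_cayleyKlein,
    LambdaMat_eq_cayleyKlein, smul_mul_smul_comm, smul_mul_assoc,
    cayleyKlein_one_mul_cayleyKlein_one, cayleyKlein_conj_mul_cayleyKlein_phase hw, smul_smul,
    sqrt_one_add_normSq_div hw]
  congr 1
  rw [ofReal_div, inv_div]
  push_cast
  ring
end

section
/- The open unit disk D = {ζ ∈ ℂ : |ζ| < 1} with the operation ζ∗η = (ζ + η)/(1 + conj(ζ)·η) is a two-sided loop with neutral element 0: (i) 0∗ζ = ζ∗0 = ζ for all ζ ∈ D; (ii) for all ζ, b ∈ D there exists a unique x ∈ D with ζ∗x = b; and (iii) for all ζ, b ∈ D there exists a unique y ∈ D with y∗ζ = b. -/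
/-!
The identity `|1 + conj ζ η|² - |ζ + η|² = (1 - |ζ|²)(1 - |η|²)` shows that when
`ζ + η = b (1 + conj ζ η)` with `|b| < 1`, the number `ζ` lies in the disk iff `η` does.
So both divisions reduce to solving this cleared equation over all of `ℂ`: it is ℂ-linear
in `η`, and in `ζ` it reads `ζ - bη · conj ζ = b - η`, an ℝ-linear equation that is
uniquely solvable because `|bη| < 1`.
-/

open Complex

/-- The QH² operation ζ∗η = (ζ + η)/(1 + conj(ζ)·η) on ℂ. -/
noncomputable def qhOp (ζ η : ℂ) : ℂ := (ζ + η) / (1 + (starRingEnd ℂ) ζ * η)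

open ComplexConjugate

theorem Complex.normSq_one_add_conj_mul_sub_normSq_add (ζ η : ℂ) :
    normSq (1 + conj ζ * η) - normSq (ζ + η) = (1 - normSq ζ) * (1 - normSq η) := by
  simp only [normSq_apply, mul_re, mul_im, add_re, add_im, one_re, one_im, conj_re, conj_im]
  ring

theorem Complex.norm_lt_one_iff_normSq_lt_one (z : ℂ) : ‖z‖ < 1 ↔ normSq z < 1 := by
  rw [normSq_eq_norm_sq, sq_lt_one_iff₀ (norm_nonneg z)]

theorem one_add_conj_mul_ne_zero {ζ η : ℂ} (hζ : ‖ζ‖ < 1) (hη : ‖η‖ < 1) :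
    1 + conj ζ * η ≠ 0 := by
  intro h
  have hnorm : ‖conj ζ * η‖ = 1 := by rw [eq_neg_of_add_eq_zero_right h, norm_neg, norm_one]
  rw [norm_mul, norm_conj] at hnorm
  nlinarith [norm_nonneg ζ, norm_nonneg η]

theorem qhOp_eq_iff {ζ η b : ℂ} (hζ : ‖ζ‖ < 1) (hη : ‖η‖ < 1) :
    qhOp ζ η = b ↔ ζ + η = b * (1 + conj ζ * η) :=
  div_eq_iff (one_add_conj_mul_ne_zero hζ hη)

theorem norm_lt_one_iff_of_add_eq_mul {ζ η b : ℂ} (h : ζ + η = b * (1 + conj ζ * η))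
    (hb : ‖b‖ < 1) : ‖ζ‖ < 1 ↔ ‖η‖ < 1 := by
  by_cases hden : 1 + conj ζ * η = 0
  · rw [hden, mul_zero, add_eq_zero_iff_eq_neg'] at h
    rw [h, norm_neg]
  have hpos : 0 < (1 - normSq ζ) * (1 - normSq η) := by
    rw [← normSq_one_add_conj_mul_sub_normSq_add, h, normSq_mul, ← one_sub_mul]
    have := (norm_lt_one_iff_normSq_lt_one b).1 hb
    exact mul_pos (by linarith) (normSq_pos.2 hden)
  rw [norm_lt_one_iff_normSq_lt_one, norm_lt_one_iff_normSq_lt_one]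
  simpa only [sub_pos] using pos_iff_pos_of_mul_pos hpos

theorem norm_lt_one_and_qhOp_eq_iff_left {ζ η b : ℂ} (hζ : ‖ζ‖ < 1) (hb : ‖b‖ < 1) :
    ‖η‖ < 1 ∧ qhOp ζ η = b ↔ ζ + η = b * (1 + conj ζ * η) := by
  refine ⟨fun ⟨hη, h⟩ => (qhOp_eq_iff hζ hη).1 h, fun h => ?_⟩
  have hη := (norm_lt_one_iff_of_add_eq_mul h hb).1 hζ
  exact ⟨hη, (qhOp_eq_iff hζ hη).2 h⟩

theorem norm_lt_one_and_qhOp_eq_iff_right {ζ η b : ℂ} (hη : ‖η‖ < 1) (hb : ‖b‖ < 1) :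
    ‖ζ‖ < 1 ∧ qhOp ζ η = b ↔ ζ + η = b * (1 + conj ζ * η) := by
  refine ⟨fun ⟨hζ, h⟩ => (qhOp_eq_iff hζ hη).1 h, fun h => ?_⟩
  have hζ := (norm_lt_one_iff_of_add_eq_mul h hb).2 hη
  exact ⟨hζ, (qhOp_eq_iff hζ hη).2 h⟩

theorem existsUnique_sub_mul_conj_eq {c : ℂ} (hc : ‖c‖ < 1) (d : ℂ) :
    ∃! y : ℂ, y - c * conj y = d := by
  have hc' : 1 - c * conj c ≠ 0 := by
    have := one_add_conj_mul_ne_zero (norm_neg c ▸ hc) hc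
    rwa [map_neg, neg_mul, mul_comm, ← sub_eq_add_neg] at this
  refine ⟨(d + c * conj d) / (1 - c * conj c), ?_, fun y hy => ?_⟩
  · simp only [map_div₀, map_add, map_sub, map_mul, map_one, conj_conj]
    rw [mul_comm (conj c) c]
    field_simp
    ring
  · have hy' : conj y - conj c * y = conj d := by rw [← hy]; simp
    rw [eq_div_iff hc']
    linear_combination hy + c * hy'

theorem existsUnique_add_eq_mul_one_add_conj_mul_left {ζ b : ℂ} (hζ : ‖ζ‖ < 1)
    (hb : ‖b‖ < 1) : ∃! x : ℂ, ζ + x = b * (1 + conj ζ * x) := by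
  have hcoeff : 1 - b * conj ζ ≠ 0 := by
    have := one_add_conj_mul_ne_zero hζ (norm_neg b ▸ hb)
    rwa [mul_neg, mul_comm, ← sub_eq_add_neg] at this
  refine ⟨(b - ζ) / (1 - b * conj ζ), ?_, fun x hx => ?_⟩
  · field_simp
    ring
  · rw [eq_div_iff hcoeff]
    linear_combination hx

theorem existsUnique_add_eq_mul_one_add_conj_mul_right {ζ b : ℂ} (hζ : ‖ζ‖ < 1)
    (hb : ‖b‖ < 1) : ∃! y : ℂ, y + ζ = b * (1 + conj y * ζ) := by
  have hbζ : ‖b * ζ‖ < 1 := by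
    rw [norm_mul]
    nlinarith [norm_nonneg b, norm_nonneg ζ]
  refine (existsUnique_congr fun y => ?_).2 (existsUnique_sub_mul_conj_eq hbζ (b - ζ))
  constructor <;> intro h <;> linear_combination h

/-- the open unit disk D with the operation ∗ is a two-sided loop with
    neutral element 0: (i) 0∗ζ = ζ∗0 = ζ for all ζ ∈ D; (ii) for all ζ, b ∈ D there
    is a unique x ∈ D with ζ∗x = b; (iii) for all ζ, b ∈ D there is a unique y ∈ D
    with y∗ζ = b. -/
theorem qh2_loop :
    (∀ ζ : ℂ, ‖ζ‖ < 1 → qhOp 0 ζ = ζ ∧ qhOp ζ 0 = ζ) ∧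
    (∀ ζ b : ℂ, ‖ζ‖ < 1 → ‖b‖ < 1 →
      ∃! x : ℂ, ‖x‖ < 1 ∧ qhOp ζ x = b) ∧
    (∀ ζ b : ℂ, ‖ζ‖ < 1 → ‖b‖ < 1 →
      ∃! y : ℂ, ‖y‖ < 1 ∧ qhOp y ζ = b) := by
  refine ⟨fun ζ _ => by simp [qhOp], fun ζ b hζ hb => ?_, fun ζ b hζ hb => ?_⟩
  · exact (existsUnique_congr fun x => norm_lt_one_and_qhOp_eq_iff_left hζ hb).2
      (existsUnique_add_eq_mul_one_add_conj_mul_left hζ hb)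
  · exact (existsUnique_congr fun y => norm_lt_one_and_qhOp_eq_iff_right hζ hb).2
      (existsUnique_add_eq_mul_one_add_conj_mul_right hζ hb)
end

section
/- For all ζ, η, ξ in the open unit disk D, one has ζ∗(η∗ξ) = (ζ∗η)∗( ((1 + ζ·conj(η))/(1 + η·conj(ζ)))·ξ ); i.e. the left associator l_{(ζ,η)} = L_{ζ∗η}^{-1} ∘ L_ζ ∘ L_η of the loop QH² is multiplication by the unimodular factor (1 + ζ·conj(η))/(1 + η·conj(ζ)). -/
/-! Both sides equal `(ζ + η + ξ + ζ·conj η·ξ) / (1 + conj ζ·η + conj η·ξ + conj ζ·ξ)`. Writing the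
inner product as a fraction `p / q`, one further step of `∗` simply clears the denominator `q`; on the
right-hand side, with `q = 1 + conj ζ·η`, the unimodular factor `conj q / q` is exactly what lets `q`
cancel as well. -/

open Complex

theorem one_add_ne_zero_of_norm_lt_one {R : Type*} [NormedRing R] [NormOneClass R] {x : R}
    (hx : ‖x‖ < 1) : 1 + x ≠ 0 := by
  intro h
  rw [← neg_eq_of_add_eq_zero_right h, norm_neg, norm_one] at hx
  exact lt_irrefl _ hx

theorem one_add_conj_mul_ne_zero_s8 {a b : ℂ} (ha : ‖a‖ < 1) (hb : ‖b‖ < 1) :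
    1 + (starRingEnd ℂ) a * b ≠ 0 := by
  apply one_add_ne_zero_of_norm_lt_one
  rw [norm_mul, norm_conj]
  exact mul_lt_one_of_nonneg_of_lt_one_left (norm_nonneg a) ha hb.le

theorem qhOp_div (ζ p : ℂ) {q : ℂ} (hq : q ≠ 0) :
    qhOp ζ (p / q) = (ζ * q + p) / (q + (starRingEnd ℂ) ζ * p) := by
  rw [qhOp, ← mul_div_mul_right _ _ hq]
  congr 1 <;> field_simp

theorem div_qhOp_conj_div_mul (p ξ : ℂ) {q : ℂ} (hq : q ≠ 0) :
    qhOp (p / q) ((starRingEnd ℂ) q / q * ξ) =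
      (p + (starRingEnd ℂ) q * ξ) / (q + (starRingEnd ℂ) p * ξ) := by
  have hq' : (starRingEnd ℂ) q ≠ 0 := (map_ne_zero _).mpr hq
  rw [qhOp, map_div₀, ← mul_div_mul_right _ _ hq]
  congr 1 <;> field_simp

/-- for ζ, η, ξ in the open unit disk, the left associator of QH² is
    multiplication by (1 + ζ·conj η)/(1 + η·conj ζ):
    ζ∗(η∗ξ) = (ζ∗η)∗( ((1 + ζ·conj η)/(1 + η·conj ζ))·ξ ). -/
theorem qh2_left_associator (ζ η ξ : ℂ)
    (hζ : ‖ζ‖ < 1) (hη : ‖η‖ < 1) (hξ : ‖ξ‖ < 1) :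
    qhOp ζ (qhOp η ξ) =
      qhOp (qhOp ζ η)
        ((1 + ζ * (starRingEnd ℂ) η) / (1 + η * (starRingEnd ℂ) ζ) * ξ) := by
  set q := 1 + (starRingEnd ℂ) ζ * η with hq_def
  have hq : q ≠ 0 := one_add_conj_mul_ne_zero_s8 hζ hη
  have hfactor : (1 + ζ * (starRingEnd ℂ) η) / (1 + η * (starRingEnd ℂ) ζ) =
      (starRingEnd ℂ) q / q := by
    simp only [hq_def, map_add, map_one, map_mul, conj_conj, mul_comm]
  rw [hfactor, show qhOp ζ η = (ζ + η) / q from rfl, div_qhOp_conj_div_mul _ _ hq,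
    show qhOp η ξ = (η + ξ) / (1 + (starRingEnd ℂ) η * ξ) from rfl,
    qhOp_div _ _ (one_add_conj_mul_ne_zero_s8 hη hξ)]
  simp only [hq_def, map_add, map_one, map_mul, conj_conj]
  congr 1 <;> ring
end

section
/- Let θ, ψ ∈ ℝ with cos(θ/2) ≠ 0, cos((θ + π/2)/2) ≠ 0 and tan(θ/2) ≠ 1. Then tan((θ + π/2)/2)·e^{iψ} = (e^{iψ} + tan(θ/2)·e^{iψ}) / (1 − conj(e^{iψ})·(tan(θ/2)·e^{iψ})); i.e. the fiber coordinates ζ₋ = tan(θ/2)e^{iψ} and ζ₊ = tan((θ+π/2)/2)e^{iψ} of the principal QS² bundle S³ over S¹ are related by the left translation ζ₊ = L_{q₊₋} ζ₋ of the loop QℂC with transition function q₊₋ = e^{iψ}. -/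
/-!
Since `|e^{iψ}| = 1`, the denominator `1 - conj(q)·(t q)` collapses to `1 - t`, so left translation
by `q` sends `t q` to `(1 + t)/(1 - t) · q`; and `(1 + tan x)/(1 - tan x) = tan (x + π/4)` is the
addition formula for the tangent.
-/

open Complex ComplexConjugate

lemma Real.tan_add_of_cos_ne_zero {x y : ℝ} (hx : Real.cos x ≠ 0) (hy : Real.cos y ≠ 0) :
    Real.tan (x + y) = (Real.tan x + Real.tan y) / (1 - Real.tan x * Real.tan y) :=
  Real.tan_add' ⟨fun k hk => hx (Real.cos_eq_zero_iff.mpr ⟨k, hk⟩),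
    fun l hl => hy (Real.cos_eq_zero_iff.mpr ⟨l, hl⟩)⟩

lemma Real.tan_add_pi_div_four {x : ℝ} (hx : Real.cos x ≠ 0) :
    Real.tan (x + Real.pi / 4) = (1 + Real.tan x) / (1 - Real.tan x) := by
  rw [tan_add_of_cos_ne_zero hx (by simp [cos_pi_div_four]), tan_pi_div_four, mul_one, add_comm]

lemma Complex.add_mul_div_one_sub_conj_mul_of_norm_eq_one {q : ℂ} (hq : ‖q‖ = 1) (t : ℂ) :
    (q + t * q) / (1 - conj q * (t * q)) = (1 + t) / (1 - t) * q := by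
  have hconj : conj q * (t * q) = t := by rw [mul_left_comm, conj_mul', hq]; simp
  rw [hconj, div_mul_eq_mul_div, add_mul, one_mul]

theorem qs2_bundle_transition_general (θ ψ : ℝ)
    (h1 : Real.cos (θ / 2) ≠ 0) :
    (Real.tan ((θ + Real.pi / 2) / 2) : ℂ) * Complex.exp (Complex.I * (ψ : ℂ)) =
      (Complex.exp (Complex.I * (ψ : ℂ)) +
          (Real.tan (θ / 2) : ℂ) * Complex.exp (Complex.I * (ψ : ℂ))) /
        (1 - (starRingEnd ℂ) (Complex.exp (Complex.I * (ψ : ℂ))) *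
          ((Real.tan (θ / 2) : ℂ) * Complex.exp (Complex.I * (ψ : ℂ)))) := by
  have hq : ‖Complex.exp (Complex.I * ψ)‖ = 1 := by
    rw [mul_comm]; exact norm_exp_ofReal_mul_I ψ
  have hangle : (θ + Real.pi / 2) / 2 = θ / 2 + Real.pi / 4 := by ring
  rw [add_mul_div_one_sub_conj_mul_of_norm_eq_one hq, hangle, Real.tan_add_pi_div_four h1]
  push_cast
  rfl

/-- the fiber coordinates ζ₋ = tan(θ/2)e^{iψ} and
    ζ₊ = tan((θ+π/2)/2)e^{iψ} of the principal QS² bundle S³ over S¹ are related by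
    the QℂC left translation ζ₊ = L_{q₊₋} ζ₋ with transition function q₊₋ = e^{iψ}:
    tan((θ + π/2)/2)·e^{iψ} = (e^{iψ} + tan(θ/2)·e^{iψ}) / (1 − conj(e^{iψ})·(tan(θ/2)·e^{iψ})). -/
theorem qs2_bundle_transition (θ ψ : ℝ)
    (h1 : Real.cos (θ / 2) ≠ 0)
    (h2 : Real.cos ((θ + Real.pi / 2) / 2) ≠ 0)
    (h3 : Real.tan (θ / 2) ≠ 1) :
    (Real.tan ((θ + Real.pi / 2) / 2) : ℂ) * Complex.exp (Complex.I * (ψ : ℂ)) =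
      (Complex.exp (Complex.I * (ψ : ℂ)) +
          (Real.tan (θ / 2) : ℂ) * Complex.exp (Complex.I * (ψ : ℂ))) /
        (1 - (starRingEnd ℂ) (Complex.exp (Complex.I * (ψ : ℂ))) *
          ((Real.tan (θ / 2) : ℂ) * Complex.exp (Complex.I * (ψ : ℂ)))) :=
  qs2_bundle_transition_general θ ψ h1
end

section
/- Let ζ₋, ζ₊ ∈ ℂ with |ζ₋|·|ζ₊| ≠ 1, and set q := (ζ₊·(1 − ζ₋·conj(ζ₊)) − ζ₋·(1 − conj(ζ₋)·ζ₊)) / (1 − |ζ₋|²·|ζ₊|²). Then q + ζ₋ = ζ₊·(1 − conj(q)·ζ₋), i.e. q is a solution of the transition-function equation ζ₊ = L_q ζ₋ = (q + ζ₋)/(1 − conj(q)·ζ₋) of the loop QℂC; moreover q is the unique complex number satisfying q + conj(q)·ζ₋·ζ₊ = ζ₊ − ζ₋. -/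
open Complex

/-! Conjugating `w + w̄ c = b` gives `w̄ + w c̄ = b̄`; eliminating `w̄` leaves `w (1 - c c̄) = b - c b̄`,
so for `c c̄ ≠ 1` this real-linear equation has exactly one solution. With `b = ζ₊ - ζ₋` and
`c = ζ₋ ζ₊` that solution is `q`, and `q + q̄ ζ₋ ζ₊ = ζ₊ - ζ₋` is a rearrangement of
`q + ζ₋ = ζ₊ (1 - q̄ ζ₋)`. -/

theorem add_star_mul_eq_iff {K : Type*} [Field K] [StarRing K] {b c w : K}
    (hc : c * star c ≠ 1) :
    w + star w * c = b ↔ w = (b - c * star b) / (1 - c * star c) := by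
  have hc' : 1 - c * star c ≠ 0 := sub_ne_zero.mpr hc.symm
  constructor
  · intro hw
    have hw_star : star w + w * star c = star b := by
      simpa only [star_add, star_mul', star_star] using congrArg star hw
    exact eq_div_of_mul_eq hc' (by linear_combination hw - c * hw_star)
  · rintro rfl
    rw [star_div₀, star_sub, star_sub, star_mul', star_mul', star_one, star_star, star_star]
    have hc'' : 1 - star c * c ≠ 0 := by rwa [mul_comm]
    field_simp
    ring

/-- with q := (ζ₊·(1 − ζ₋·conj ζ₊) − ζ₋·(1 − conj(ζ₋)·ζ₊))/(1 − |ζ₋|²|ζ₊|²),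
    one has q + ζ₋ = ζ₊·(1 − conj(q)·ζ₋), i.e. q solves the transition-function
    equation ζ₊ = L_q ζ₋ of the loop QℂC; moreover q is the unique complex number
    with q + conj(q)·ζ₋·ζ₊ = ζ₊ − ζ₋. -/
theorem qs2_transition_function (ζm ζp : ℂ)
    (h : ‖ζm‖ * ‖ζp‖ ≠ 1) :
    let q : ℂ := (ζp * (1 - ζm * (starRingEnd ℂ) ζp) - ζm * (1 - (starRingEnd ℂ) ζm * ζp)) /
      (1 - (‖ζm‖ : ℂ) ^ 2 * (‖ζp‖ : ℂ) ^ 2)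
    q + ζm = ζp * (1 - (starRingEnd ℂ) q * ζm) ∧
      ∀ q' : ℂ, q' + (starRingEnd ℂ) q' * ζm * ζp = ζp - ζm ↔ q' = q := by
  intro q
  have hnorm : ζm * ζp * star (ζm * ζp) = (‖ζm‖ : ℂ) ^ 2 * (‖ζp‖ : ℂ) ^ 2 := by
    rw [← starRingEnd_apply, mul_conj', norm_mul]
    push_cast
    ring
  have hc : ζm * ζp * star (ζm * ζp) ≠ 1 := by
    rw [hnorm, ← mul_pow, ← ofReal_mul, ← ofReal_pow, Ne, ofReal_eq_one,
      pow_eq_one_iff_of_nonneg (by positivity) two_ne_zero]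
    exact h
  have hq : q = (ζp - ζm - ζm * ζp * star (ζp - ζm)) / (1 - ζm * ζp * star (ζm * ζp)) := by
    rw [hnorm, star_sub]
    simp only [q, starRingEnd_apply]
    ring
  have hsolves (w : ℂ) :
      w + (starRingEnd ℂ) w * ζm * ζp = ζp - ζm ↔ w = q := by
    rw [hq, mul_assoc, starRingEnd_apply]
    exact add_star_mul_eq_iff hc
  refine ⟨?_, hsolves⟩
  linear_combination (hsolves q).mpr rfl
end

section
/- For all real numbers γ, α, β with cos α ≠ 0, cos β ≠ 0, cos(α + β) ≠ 0 and 1 − tan α · tan β ≠ 0, one has (e^{iγ}·tan α) · (e^{iγ}·tan β) = e^{iγ}·tan(α + β), where · is the QℂC product. In particular, for q₊₋ = e^{iγ}·tan(θ/2), the n-th power transition function of the principal QS² bundle over S² is qⁿ₊₋ = e^{iγ}·tan(nθ/2). -/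
open Complex

/- Along a ray `u • ℝ` with `|u| = 1` the factor `conj u * u` in the denominator of the QℂC product
is `1`, so the product of `u a` and `u b` is `u` times the real number `(a + b) / (1 - a b)`;
for `a = tan α`, `b = tan β` this is the tangent addition formula. -/

theorem qcMul_mul_ofReal_of_norm_eq_one {u : ℂ} (hu : ‖u‖ = 1) (a b : ℝ) :
    qcMul (u * a) (u * b) = u * ((a + b) / (1 - a * b) : ℝ) := by
  have hconj : (starRingEnd ℂ) (u * a) * (u * b) = ((a * b : ℝ) : ℂ) := by
    rw [map_mul, conj_ofReal, mul_mul_mul_comm, conj_mul', hu]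
    push_cast
    ring
  rw [qcMul, hconj]
  push_cast
  ring

theorem qc_tan_addition_general (γ α β : ℝ)
    (hα : Real.cos α ≠ 0) (hβ : Real.cos β ≠ 0) :
    qcMul (Complex.exp (Complex.I * (γ : ℂ)) * (Real.tan α : ℂ))
          (Complex.exp (Complex.I * (γ : ℂ)) * (Real.tan β : ℂ)) =
      Complex.exp (Complex.I * (γ : ℂ)) * (Real.tan (α + β) : ℂ) := by
  rw [Real.tan_add' ⟨Real.cos_ne_zero_iff.mp hα, Real.cos_ne_zero_iff.mp hβ⟩]
  exact qcMul_mul_ofReal_of_norm_eq_one (norm_exp_I_mul_ofReal γ) _ _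

/-- along each ray e^{iγ}·ℝ the QℂC product is the tangent addition
    law: (e^{iγ}·tan α) · (e^{iγ}·tan β) = e^{iγ}·tan(α + β). This underlies the
    formula qⁿ₊₋ = e^{iγ}·tan(nθ/2) for the n-th power transition function of the
    principal QS² bundle over S². -/
theorem qc_tan_addition (γ α β : ℝ)
    (hα : Real.cos α ≠ 0) (hβ : Real.cos β ≠ 0)
    (hαβ : Real.cos (α + β) ≠ 0)
    (htan : 1 - Real.tan α * Real.tan β ≠ 0) :
    qcMul (Complex.exp (Complex.I * (γ : ℂ)) * (Real.tan α : ℂ))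
          (Complex.exp (Complex.I * (γ : ℂ)) * (Real.tan β : ℂ)) =
      Complex.exp (Complex.I * (γ : ℂ)) * (Real.tan (α + β) : ℂ) :=
  qc_tan_addition_general γ α β hα hβ
end
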